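/- Let G = ⟨N, E, L, root⟩ be an egraph, rep an admissible representative function for G, and S ⊆ N a set of nodes such that rep(n) ∉ S for every n ∈ N. Let NS = {n ∈ N ∖ S : (class(n) ∖ S) ≠ {n}} (the nodes outside S whose class has at least two nodes outside S). Let v be a logical variable and n_v the (unique) node with L(n_v) = v. If n_v is not reachable in G_rep by a directed path of length ≥ 0 from any node in NS, then v does not occur in the formula toformula(rep, S). (This is condition (2) of the relative-completeness theorem for QEL.) -/
import Mathlib


inductive Term (Sym Var : Type) : Type where
  | var : Var → Term Sym Var
  | app : Sym → List (Term Sym Var) → Term Sym Var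

namespace Term

inductive HasVar {Sym Var : Type} (v : Var) : Term Sym Var → Prop where
  | var : HasVar v (Term.var v)
  | app {f : Sym} {args : List (Term Sym Var)} {t : Term Sym Var} :
      t ∈ args → HasVar v t → HasVar v (Term.app f args)

/-- A term is ground if it contains no variables. -/
def Ground {Sym Var : Type} (t : Term Sym Var) : Prop := ∀ v : Var, ¬ HasVar v t

/-- `ImmSub s t` : `s` is an immediate subterm of `t`. -/
def ImmSub {Sym Var : Type} (s t : Term Sym Var) : Prop :=
  ∃ (f : Sym) (args : List (Term Sym Var)), t = Term.app f args ∧ s ∈ args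

/-- Evaluation of a term in a Σ-structure with domain `D`, interpretation `I` of
function symbols, and valuation `ρ` of the variables (treated as fresh constants). -/
def eval {Sym Var D : Type} (I : Sym → List D → D) (ρ : Var → D) : Term Sym Var → D
  | .var v => ρ v
  | .app f args => I f (args.attach.map fun t => eval I ρ t.1)
  termination_by t => sizeOf t
  decreasing_by
    have := List.sizeOf_lt_of_mem t.2
    simp only [Term.app.sizeOf_spec]
    omega

/-- Height of a term: leaves have height 1; a non-leaf has height one more than the
maximum height of its immediate subterms. -/
def height {Sym Var : Type} : Term Sym Var → ℕ
  | .var _ => 1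
  | .app _ args => 1 + (args.attach.map fun t => height t.1).foldr max 0
  termination_by t => sizeOf t
  decreasing_by
    have := List.sizeOf_lt_of_mem t.2
    simp only [Term.app.sizeOf_spec]
    omega

end Term

/-- An egraph over a functional signature `Sym` with variables `Var`. -/
structure EGraph (Sym Var : Type) where
  N : Type
  finN : Finite N
  children : N → List N
  label : N → Sym ⊕ Var
  root : N → N
  /-- `⟨N, E⟩` is a DAG. -/
  dag : ∀ n : N, ¬ Relation.TransGen (fun a b : N => a ∈ children b) n n
  /-- only leaves may be labeled by variables. -/
  varLeaf : ∀ (n : N) (v : Var), label n = Sum.inr v → children n = []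
  /-- `ρ_root` is closed under congruence. -/
  congrClosed : ∀ n n' : N, label n = label n' → children n ≠ [] →
    List.Forall₂ (fun a b => root a = root b) (children n) (children n') →
    root n = root n'

theorem wf_of_acyclic {α : Type} [Finite α] {r : α → α → Prop}
    (h : ∀ a, ¬ Relation.TransGen r a a) : WellFounded r := by
  have htg : WellFounded (Relation.TransGen r) := by
    haveI : IsIrrefl α (Relation.TransGen r) := ⟨h⟩
    haveI : IsTrans α (Relation.TransGen r) :=
      ⟨fun _ _ _ hab hbc => Relation.TransGen.trans hab hbc⟩
    exact Finite.wellFounded_of_trans_of_irrefl _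
  exact Subrelation.wf (fun {a b} hab => Relation.TransGen.single hab) htg

namespace EGraph

variable {Sym Var : Type}

/-- The term of a node. -/
noncomputable def term (G : EGraph Sym Var) : G.N → Term Sym Var :=
  haveI := G.finN
  (wf_of_acyclic G.dag).fix fun n rec =>
    match G.label n with
    | Sum.inr v => Term.var v
    | Sum.inl f => Term.app f ((G.children n).attach.map fun c => rec c.1 c.2)

/-- The edge relation of the graph `G_rep`: `repEdge G rep n m` iff `m = rep c`
for some child `c` of `n`. -/
def repEdge (G : EGraph Sym Var) (rep : G.N → G.N) (n m : G.N) : Prop :=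
  ∃ c ∈ G.children n, m = rep c

/-- An admissible representative function: (a) one representative per class,
(b) `ρ_rep = ρ_root`, (c) `G_rep` is acyclic. -/
structure Admissible (G : EGraph Sym Var) (rep : G.N → G.N) : Prop where
  rep_mem : ∀ n, G.root (rep n) = G.root n
  rep_class : ∀ n n', G.root n = G.root n' ↔ rep n = rep n'
  acyclic : ∀ n, ¬ Relation.TransGen (G.repEdge rep) n n

/-- Extraction of the term of a node relative to an admissible representative
function, by well-founded recursion on `G_rep`. -/
noncomputable def toexpr (G : EGraph Sym Var) (rep : G.N → G.N)
    (h : G.Admissible rep) : G.N → Term Sym Var :=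
  haveI := G.finN
  (wf_of_acyclic (r := Function.swap (G.repEdge rep))
      (fun a hta => h.acyclic a hta.swap)).fix
    fun n rec =>
      match G.label n with
      | Sum.inr v => Term.var v
      | Sum.inl f =>
          Term.app f ((G.children n).attach.map fun c => rec (rep c.1) ⟨c.1, c.2, rfl⟩)

/-- Satisfaction of `toformula(rep, S)` in a Σ-structure: all its equality literals
`toexpr(rep n) ≐ toexpr(n)` (for `n ∉ S` not a representative) hold. -/
def SatFormula {D : Type} (G : EGraph Sym Var) (rep : G.N → G.N) (h : G.Admissible rep)
    (S : Set G.N) (I : Sym → List D → D) (ρ : Var → D) : Prop :=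
  ∀ n, n ≠ rep n → n ∉ S →
    Term.eval I ρ (G.toexpr rep h (rep n)) = Term.eval I ρ (G.toexpr rep h n)

/-- The variable `v` occurs in the formula `toformula(rep, S)`. -/
def OccursIn (G : EGraph Sym Var) (rep : G.N → G.N) (h : G.Admissible rep)
    (S : Set G.N) (v : Var) : Prop :=
  ∃ n, n ≠ rep n ∧ n ∉ S ∧
    ((G.toexpr rep h (rep n)).HasVar v ∨ (G.toexpr rep h n).HasVar v)

/-- Constructively ground nodes. -/
inductive CGround (G : EGraph Sym Var) : G.N → Prop where
  | ground {n : G.N} : (G.term n).Ground → CGround G n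
  | app {n : G.N} (w : (c : G.N) → c ∈ G.children n → G.N) :
      G.children n ≠ [] →
      (∀ c hc, G.root (w c hc) = G.root c) →
      (∀ c hc, CGround G (w c hc)) →
      CGround G n

/-- A class is ground if it contains a c-ground node. -/
def GroundClass (G : EGraph Sym Var) (n : G.N) : Prop :=
  ∃ m, G.root m = G.root n ∧ G.CGround m

/-- A representative function is maximally ground if representatives of ground
classes are c-ground. -/
def MaxGround (G : EGraph Sym Var) (rep : G.N → G.N) : Prop :=
  ∀ n, G.GroundClass n → G.CGround (rep n)

/-- Edge relation of the graph `⟨N, E_r⟩` for a partial representative function. -/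
def pEdge (G : EGraph Sym Var) (r : G.N → Option G.N) (n m : G.N) : Prop :=
  ∃ c ∈ G.children n, r c = some m

/-- Admissible partial representative functions. -/
structure PAdmissible (G : EGraph Sym Var) (r : G.N → Option G.N) : Prop where
  classCond : ∀ n : G.N, r n ≠ none → ∀ m : G.N, (G.root m = G.root n ↔ r m = r n)
  acyclic : ∀ n, ¬ Relation.TransGen (G.pEdge r) n n
  defined_children : ∀ n m : G.N, r m = some n → ∀ c ∈ G.children n, r c ≠ none

/-- Class frontiers of a node. -/
inductive CFrontier (G : EGraph Sym Var) (n : G.N) : Set G.N → Prop where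
  | base : CFrontier G n {c | c ∈ G.children n}
  | classSwap {Fr : Set G.N} {m c : G.N} : CFrontier G n Fr → m ∈ Fr →
      G.root c = G.root m → CFrontier G n ((Fr ∪ {c}) \ {m})
  | expand {Fr : Set G.N} {m : G.N} : CFrontier G n Fr → m ∈ Fr →
      G.children m ≠ [] → CFrontier G n ((Fr ∪ {c | c ∈ G.children m}) \ {m})

end EGraph

theorem toexpr_eq {Sym Var : Type} (G : EGraph Sym Var) (rep : G.N → G.N)
    (h : G.Admissible rep) (n : G.N) :
    G.toexpr rep h n = match G.label n with
      | Sum.inr v => Term.var v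
      | Sum.inl f =>
          Term.app f ((G.children n).attach.map fun c => G.toexpr rep h (rep c.1)) := by
  unfold EGraph.toexpr
  rw [WellFounded.fix_eq]

theorem reach_of_hasVar {Sym Var : Type} (G : EGraph Sym Var) (rep : G.N → G.N)
    (h : G.Admissible rep) (v : Var) (nv : G.N)
    (huniq : ∀ m : G.N, G.label m = Sum.inr v → m = nv) :
    ∀ n : G.N, (G.toexpr rep h n).HasVar v →
      Relation.ReflTransGen (G.repEdge rep) n nv := by
  haveI := G.finN
  have wf : WellFounded (Function.swap (G.repEdge rep)) :=
    wf_of_acyclic (fun a hta => h.acyclic a hta.swap)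
  intro n
  induction n using wf.induction with
  | _ n ih =>
    intro hv
    rw [toexpr_eq] at hv
    rcases hl : G.label n with f | w
    · rw [hl] at hv
      cases hv with
      | app ht htv =>
        rcases List.mem_map.mp ht with ⟨c, _, rfl⟩
        have hedge : G.repEdge rep n (rep c.1) := ⟨c.1, c.2, rfl⟩
        exact Relation.ReflTransGen.head hedge (ih (rep c.1) hedge htv)
    · rw [hl] at hv
      cases hv
      have : n = nv := huniq n hl
      exact this ▸ Relation.ReflTransGen.refl

/-- let `S` contain no representatives, let `NS` consist of the nodes
outside `S` whose class has at least two nodes outside `S`, and let `n_v` be the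
unique node labeled by the variable `v`. If `n_v` is not reachable in `G_rep` (by a
directed path of length ≥ 0) from any node of `NS`, then `v` does not occur in
`toformula(rep, S)`. -/
theorem var_eliminated_of_unreachable {Sym Var : Type} (G : EGraph Sym Var)
    (rep : G.N → G.N) (h : G.Admissible rep)
    (S : Set G.N) (hrepS : ∀ n : G.N, rep n ∉ S)
    (v : Var) (nv : G.N)
    (hlabel : G.label nv = Sum.inr v)
    (huniq : ∀ m : G.N, G.label m = Sum.inr v → m = nv)
    (hreach : ∀ m : G.N, m ∉ S →
      ({x : G.N | G.root x = G.root m ∧ x ∉ S} ≠ {m}) →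
      ¬ Relation.ReflTransGen (G.repEdge rep) m nv) :
    ¬ G.OccursIn rep h S v := by
  rintro ⟨n, hne, hnS, hvar⟩
  have hroot : G.root (rep n) = G.root n := h.rep_mem n
  cases hvar with
  | inl hvar =>
      have hne2 : ({x : G.N | G.root x = G.root (rep n) ∧ x ∉ S} : Set G.N) ≠ {rep n} := by
        intro heq
        have : n ∈ ({x : G.N | G.root x = G.root (rep n) ∧ x ∉ S} : Set G.N) :=
          ⟨hroot.symm, hnS⟩
        rw [heq] at this
        exact hne this
      exact hreach (rep n) (hrepS n) hne2
        (reach_of_hasVar G rep h v nv huniq (rep n) hvar)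
  | inr hvar =>
      have hne2 : ({x : G.N | G.root x = G.root n ∧ x ∉ S} : Set G.N) ≠ {n} := by
        intro heq
        have : rep n ∈ ({x : G.N | G.root x = G.root n ∧ x ∉ S} : Set G.N) :=
          ⟨hroot, hrepS n⟩
        rw [heq] at this
        exact hne this.symm
      exact hreach n hnS hne2 (reach_of_hasVar G rep h v nv huniq n hvar)
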